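/- In the convex homogeneous setup, for every q ∈ E with q ≠ 0 there exists a unique p₀ ∈ N such that ∇f p₀ = T • q for some T > 0; moreover sSup { ⟪p, q⟫ | p ∈ N } = ⟪p₀, q⟫. (Section 3.2: the homogeneous Legendre transform satisfies Lf(q) = sup_{p∈N} ⟨p,q⟩ = ⟨p₀,q⟩ for the unique p₀ ∈ N whose Gauss normal n(p₀) is positively proportional to q.) -/

import Mathlib

/-!
Maximize `⟪q, ·⟫` over the compact level set `N = f⁻¹' {1}` at some `p₀`, with value `M > 0`.
By homogeneity `⟪q, x⟫ ≤ M * f x` for every `x`, with equality at `p₀`, so `p₀` is an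
unconstrained maximum of `⟪q, ·⟫ - M • f` and Fermat's rule gives `q = M • ∇f p₀`.
Conversely, if `∇f p` is a positive multiple of `q` at `p ∈ N`, then `p` maximizes `f` on the
convex set `K`, so `∇f p` is an outer normal of `K` at `p` and `p` maximizes `⟪q, ·⟫` on `K`.
Two distinct maximizers of a nonzero linear functional on a strictly convex set are
impossible, since their midpoint is interior and could be pushed further along `q`.
-/

open scoped RealInnerProductSpace
open Filter Topology InnerProductSpace

section Homogeneous

variable {E : Type*} [NormedAddCommGroup E] [NormedSpace ℝ E] {f : E → ℝ}

theorem map_zero_of_homogeneous (hf_hom : ∀ t : ℝ, 0 < t → ∀ x, f (t • x) = t * f x) :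
    f 0 = 0 := by
  have := hf_hom 2 two_pos 0
  rw [smul_zero] at this
  linarith

theorem homogeneous_inv_smul_eq_one (hf_hom : ∀ t : ℝ, 0 < t → ∀ x, f (t • x) = t * f x)
    {x : E} (hx : 0 < f x) : f ((f x)⁻¹ • x) = 1 := by
  rw [hf_hom _ (inv_pos.2 hx), inv_mul_cancel₀ hx.ne']

theorem exists_pos_mul_norm_le_of_homogeneous [ProperSpace E] [Nontrivial E]
    (hf_cont : Continuous f) (hf_hom : ∀ t : ℝ, 0 < t → ∀ x, f (t • x) = t * f x)
    (hf_pos : ∀ x : E, x ≠ 0 → 0 < f x) : ∃ m > 0, ∀ x, m * ‖x‖ ≤ f x := by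
  obtain ⟨z, hz, hz_min⟩ := (isCompact_sphere (0 : E) 1).exists_isMinOn
    (NormedSpace.sphere_nonempty.2 zero_le_one) hf_cont.continuousOn
  refine ⟨f z, hf_pos z (ne_zero_of_mem_unit_sphere ⟨z, hz⟩), fun x => ?_⟩
  rcases eq_or_ne x 0 with rfl | hx
  · simp [map_zero_of_homogeneous hf_hom]
  have hnx : 0 < ‖x‖ := norm_pos_iff.2 hx
  have hu : ‖x‖⁻¹ • x ∈ Metric.sphere (0 : E) 1 := by
    rw [mem_sphere_zero_iff_norm, norm_smul, norm_inv, norm_norm, inv_mul_cancel₀ hnx.ne']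
  have : f z ≤ f (‖x‖⁻¹ • x) := hz_min hu
  rw [hf_hom _ (inv_pos.2 hnx), inv_mul_eq_div, le_div_iff₀ hnx] at this
  linarith

theorem isCompact_sublevel_of_homogeneous [ProperSpace E] [Nontrivial E]
    (hf_cont : Continuous f) (hf_hom : ∀ t : ℝ, 0 < t → ∀ x, f (t • x) = t * f x)
    (hf_pos : ∀ x : E, x ≠ 0 → 0 < f x) (c : ℝ) : IsCompact {x | f x ≤ c} := by
  obtain ⟨m, hm, hbound⟩ := exists_pos_mul_norm_le_of_homogeneous hf_cont hf_hom hf_pos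
  refine Metric.isCompact_of_isClosed_isBounded (isClosed_le hf_cont continuous_const)
    ((Metric.isBounded_closedBall (x := (0 : E)) (r := c / m)).subset fun x hx => ?_)
  rw [mem_closedBall_zero_iff, le_div_iff₀ hm, mul_comm]
  exact (hbound x).trans hx

end Homogeneous

section InnerProductSpace

variable {E : Type*} [NormedAddCommGroup E] [InnerProductSpace ℝ E]

theorem StrictConvex.eq_of_isMaxOn_inner {s : Set E} (hs : StrictConvex ℝ s) {q x y : E}
    (hq : q ≠ 0) (hx : x ∈ s) (hy : y ∈ s) (hx_max : IsMaxOn (⟪q, ·⟫) s x)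
    (hy_max : IsMaxOn (⟪q, ·⟫) s y) : x = y := by
  by_contra hne
  set m : E := (1 / 2 : ℝ) • x + (1 / 2 : ℝ) • y
  have hm : m ∈ interior s := hs hx hy hne (by norm_num) (by norm_num) (by norm_num)
  have hqm : ⟪q, m⟫ = ⟪q, x⟫ := by
    have hxy : ⟪q, x⟫ = ⟪q, y⟫ := le_antisymm (hy_max hx) (hx_max hy)
    simp only [m, inner_add_right, real_inner_smul_right, ← hxy]
    ring
  have hmove : ∀ᶠ t in 𝓝[>] (0 : ℝ), m + t • q ∈ s := by
    have hcont : Tendsto (fun t : ℝ => m + t • q) (𝓝 0) (𝓝 m) :=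
      (continuous_const.add (continuous_id.smul continuous_const)).tendsto' 0 m (by simp [m])
    exact nhdsWithin_le_nhds (hcont (mem_interior_iff_mem_nhds.1 hm))
  obtain ⟨t, hts, ht⟩ := (hmove.and self_mem_nhdsWithin).exists
  have hgain : ⟪q, x⟫ < ⟪q, m + t • q⟫ := by
    rw [inner_add_right, real_inner_smul_right, real_inner_self_eq_norm_sq, hqm]
    have : 0 < ‖q‖ := norm_pos_iff.2 hq
    have ht' : (0 : ℝ) < t := ht
    exact lt_add_of_pos_right _ (by positivity)
  exact (hgain.trans_le (hx_max hts)).false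

theorem inner_le_mul_of_isMaxOn_level {f : E → ℝ}
    (hf_hom : ∀ t : ℝ, 0 < t → ∀ x, f (t • x) = t * f x) (hf_pos : ∀ x : E, x ≠ 0 → 0 < f x)
    {q p₀ : E} (hmax : IsMaxOn (⟪q, ·⟫) {x | f x = 1} p₀) (x : E) : ⟪q, x⟫ ≤ ⟪q, p₀⟫ * f x := by
  rcases eq_or_ne x 0 with rfl | hx
  · simp [map_zero_of_homogeneous hf_hom]
  have hfx := hf_pos x hx
  have : ⟪q, (f x)⁻¹ • x⟫ ≤ ⟪q, p₀⟫ := hmax (homogeneous_inv_smul_eq_one hf_hom hfx)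
  rwa [real_inner_smul_right, inv_mul_eq_div, div_le_iff₀ hfx] at this

variable [CompleteSpace E]

theorem inner_gradient_sub_nonpos_of_isMaxOn {f : E → ℝ} {g p y : E} {s : Set E}
    (hs : Convex ℝ s) (hmax : IsMaxOn f s p) (hf : HasGradientAt f g p) (hp : p ∈ s)
    (hy : y ∈ s) : ⟪g, y - p⟫ ≤ 0 := by
  have := hmax.localize.hasFDerivWithinAt_nonpos hf.hasFDerivAt.hasFDerivWithinAt
    (sub_mem_posTangentConeAt_of_segment_subset (hs.segment_subset hp hy))
  simpa [toDual_apply_apply] using this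

theorem isMaxOn_inner_of_hasGradientAt_smul {f : E → ℝ} {q p : E} {s : Set E} {T : ℝ}
    (hs : Convex ℝ s) (hmax : IsMaxOn f s p) (hf : HasGradientAt f (T • q) p) (hT : 0 < T)
    (hp : p ∈ s) : IsMaxOn (⟪q, ·⟫) s p := by
  intro y hy
  have := inner_gradient_sub_nonpos_of_isMaxOn hs hmax hf hp hy
  rw [inner_sub_right, real_inner_smul_left, real_inner_smul_left, ← mul_sub] at this
  simpa [sub_nonpos] using nonpos_of_mul_nonpos_right this hT

theorem eq_smul_of_hasGradientAt_of_inner_le_mul {f : E → ℝ} {g q p : E} {c : ℝ}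
    (hf : HasGradientAt f g p) (hle : ∀ x, ⟪q, x⟫ ≤ c * f x) (heq : ⟪q, p⟫ = c * f p) :
    q = c • g := by
  have hlocal : IsLocalMax (fun x => ⟪q, x⟫ - c * f x) p :=
    Eventually.of_forall fun x => by simpa [heq] using hle x
  have hderiv : HasFDerivAt (fun x => ⟪q, x⟫ - c * f x) (toDual ℝ E (q - c • g)) p := by
    rw [map_sub, map_smul]
    exact (toDual ℝ E q).hasFDerivAt.sub (hf.hasFDerivAt.const_mul c)
  have := hlocal.hasFDerivAt_eq_zero hderiv
  rwa [LinearIsometryEquiv.map_eq_zero_iff, sub_eq_zero] at this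

end InnerProductSpace

theorem legendre_sup_attained_general (d : ℕ)
    (f : EuclideanSpace ℝ (Fin d) → ℝ)
    (gradf : EuclideanSpace ℝ (Fin d) → EuclideanSpace ℝ (Fin d))
    (hf_cont : Continuous f)
    (hf_hom : ∀ t : ℝ, 0 < t → ∀ x, f (t • x) = t * f x)
    (hf_pos : ∀ x : EuclideanSpace ℝ (Fin d), x ≠ 0 → 0 < f x)
    (hf_grad : ∀ x : EuclideanSpace ℝ (Fin d), x ≠ 0 → HasGradientAt f (gradf x) x)
    (hconv : StrictConvex ℝ {x : EuclideanSpace ℝ (Fin d) | f x ≤ 1})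
    (q : EuclideanSpace ℝ (Fin d)) (hq : q ≠ 0) :
    ∃ p₀ : EuclideanSpace ℝ (Fin d),
      (f p₀ = 1 ∧ ∃ T : ℝ, 0 < T ∧ gradf p₀ = T • q) ∧
      (∀ p : EuclideanSpace ℝ (Fin d),
        (f p = 1 ∧ ∃ T : ℝ, 0 < T ∧ gradf p = T • q) → p = p₀) ∧
      sSup {r : ℝ | ∃ p, f p = 1 ∧ r = ⟪p, q⟫} = ⟪p₀, q⟫ := by
  have : Nontrivial (EuclideanSpace ℝ (Fin d)) := ⟨⟨q, 0, hq⟩⟩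
  have hN_compact : IsCompact {x : EuclideanSpace ℝ (Fin d) | f x = 1} :=
    (isCompact_sublevel_of_homogeneous hf_cont hf_hom hf_pos 1).of_isClosed_subset
      (isClosed_eq hf_cont continuous_const) fun x hx => le_of_eq hx
  obtain ⟨p₀, hp₀, hmax⟩ := hN_compact.exists_isMaxOn
    ⟨_, homogeneous_inv_smul_eq_one hf_hom (hf_pos q hq)⟩
    (continuous_const.inner continuous_id : Continuous (⟪q, ·⟫)).continuousOn
  have hle := inner_le_mul_of_isMaxOn_level hf_hom hf_pos hmax
  have hM : 0 < ⟪q, p₀⟫ := pos_of_mul_pos_left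
    ((real_inner_self_pos.2 hq).trans_le (hle q)) (hf_pos q hq).le
  have hN_ne_zero : ∀ {p}, f p = 1 → p ≠ 0 := fun hp h => by
    simp [h, map_zero_of_homogeneous hf_hom] at hp
  have hgrad₀ : gradf p₀ = ⟪q, p₀⟫⁻¹ • q := by
    have := eq_smul_of_hasGradientAt_of_inner_le_mul (hf_grad p₀ (hN_ne_zero hp₀)) hle
      (by rw [hp₀, mul_one])
    rw [eq_inv_smul_iff₀ hM.ne', ← this]
  have hK_max : ∀ p, f p = 1 → (∃ T : ℝ, 0 < T ∧ gradf p = T • q) →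
      IsMaxOn (⟪q, ·⟫) {x | f x ≤ 1} p := fun p hp ⟨T, hT, hgrad⟩ =>
    isMaxOn_inner_of_hasGradientAt_smul hconv.convex (fun y hy => hp ▸ hy)
      (hgrad ▸ hf_grad p (hN_ne_zero hp)) hT hp.le
  have hT₀ : ∃ T : ℝ, 0 < T ∧ gradf p₀ = T • q := ⟨_, inv_pos.2 hM, hgrad₀⟩
  refine ⟨p₀, ⟨hp₀, hT₀⟩, fun p ⟨hp, hT⟩ => hconv.eq_of_isMaxOn_inner hq hp.le hp₀.le
    (hK_max p hp hT) (hK_max p₀ hp₀ hT₀), IsGreatest.csSup_eq ⟨⟨p₀, hp₀, rfl⟩, ?_⟩⟩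
  rintro r ⟨p, hp, rfl⟩
  have : ⟪q, p⟫ ≤ ⟪q, p₀⟫ := hmax hp
  rwa [real_inner_comm q p, real_inner_comm q p₀]

/-- **Section 3.2.** In the convex homogeneous setup, for every `q ≠ 0` there is a unique
`p₀ ∈ N = f⁻¹(1)` whose normal `∇f p₀` is positively proportional to `q`, and
`sup_{p ∈ N} ⟨p, q⟩ = ⟨p₀, q⟩`. -/
theorem legendre_sup_attained (d : ℕ) (hd : 1 ≤ d)
    (f : EuclideanSpace ℝ (Fin d) → ℝ)
    (gradf : EuclideanSpace ℝ (Fin d) → EuclideanSpace ℝ (Fin d))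
    (hf_cont : Continuous f)
    (hf_hom : ∀ t : ℝ, 0 < t → ∀ x, f (t • x) = t * f x)
    (hf_pos : ∀ x : EuclideanSpace ℝ (Fin d), x ≠ 0 → 0 < f x)
    (hf_grad : ∀ x : EuclideanSpace ℝ (Fin d), x ≠ 0 → HasGradientAt f (gradf x) x)
    (hgrad_cont : ContinuousOn gradf {x : EuclideanSpace ℝ (Fin d) | x ≠ 0})
    (hconv : StrictConvex ℝ {x : EuclideanSpace ℝ (Fin d) | f x ≤ 1})
    (q : EuclideanSpace ℝ (Fin d)) (hq : q ≠ 0) :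
    ∃ p₀ : EuclideanSpace ℝ (Fin d),
      (f p₀ = 1 ∧ ∃ T : ℝ, 0 < T ∧ gradf p₀ = T • q) ∧
      (∀ p : EuclideanSpace ℝ (Fin d),
        (f p = 1 ∧ ∃ T : ℝ, 0 < T ∧ gradf p = T • q) → p = p₀) ∧
      sSup {r : ℝ | ∃ p, f p = 1 ∧ r = ⟪p, q⟫} = ⟪p₀, q⟫ :=
  legendre_sup_attained_general d f gradf hf_cont hf_hom hf_pos hf_grad hconv q hq
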